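/- arXiv:1302.6678 — 5 statements merged into one kernel-verified Lean document; each statement's English description precedes it below -/
import Mathlib

section
/- Let 2 ≤ r ≤ 8. An element m ∈ M_r lies in the root set R_r = {m : ⟨m,k⟩ = 0, ⟨m,m⟩ = −2} if and only if there exist a sign ε ∈ {1,−1} and a permutation of the coordinates Q_1, …, Q_r after which ε·m equals one of the following: (i) Q_1 − Q_2; (ii) H − Q_1 − Q_2 − Q_3 (possible only when r ≥ 3); (iii) 2H − Q_1 − Q_2 − Q_3 − Q_4 − Q_5 − Q_6 (possible only when r ≥ 6); (iv) 3H − 2Q_1 − Q_2 − Q_3 − Q_4 − Q_5 − Q_6 − Q_7 − Q_8 (possible only when r = 8). -/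
/-- The Del Pezzo lattice of rank `1 + r`: `ℤ`-vectors with coordinates
`(H, Q_1, …, Q_r)`; coordinate `0` is the coefficient of `H` and coordinate
`i.succ` is the coefficient of `Q_i`. -/
abbrev DP (r : ℕ) := Fin (r + 1) → ℤ

/-- The bilinear form: `⟨H,H⟩ = 1`, `⟨Q_i,Q_i⟩ = -1`, other products of
distinct basis vectors vanish. -/
def dpForm {r : ℕ} (v w : DP r) : ℤ :=
  v 0 * w 0 - ∑ i : Fin r, v i.succ * w i.succ

/-- The canonical class `k = -3H + Q_1 + ⋯ + Q_r`. -/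
def dpK (r : ℕ) : DP r := fun i => if i.val = 0 then -3 else 1

/-- The root set `R_r = {m : ⟨m,k⟩ = 0, ⟨m,m⟩ = -2}`. -/
def RSet (r : ℕ) : Set (DP r) := {m | dpForm m (dpK r) = 0 ∧ dpForm m m = -2}

/-- The vector in the Del Pezzo lattice whose coordinates (w.r.t. `H, Q_1, …, Q_r`)
are given by the list `l` (padded with zeros). -/
def ofCoeffs {r : ℕ} (l : List ℤ) : DP r := fun i => l.getD i.val 0

/-- A permutation of `{1,…,r}` acts on the lattice by permuting the basis
vectors `Q_1, …, Q_r` and fixing `H`. -/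
def permAct {r : ℕ} (σ : Equiv.Perm (Fin r)) (m : DP r) : DP r :=
  Fin.cons (m 0) (fun j => m (σ j).succ)

/-!
Write `m = d H + ∑ xᵢ Qᵢ`. Membership in `R_r` says `∑ xᵢ = -3d` and `∑ xᵢ² = d² + 2`, and after
a sign change `d ≥ 0`. Cauchy–Schwarz gives `9d² ≤ r (d² + 2)`, so `d ≤ 4`, and
`∑ (xᵢ + 1)(xᵢ + 2) = d² - 9d + 2 + 2r ≥ 0` excludes `d = 4`. For `d = 1, 2, 3` a sum of products
of consecutive integers `∑ (xᵢ - a)(xᵢ - a - 1)` is `≤ 0`, so every `xᵢ` is `a` or `a + 1`, and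
the two linear equations then give the multiplicities; for `d = 0` already `xᵢ² ≤ 2`. A vector is
determined up to permutation of the `Qᵢ` by `d` and the multiset of the `xᵢ`.
-/

open Multiset

theorem Equiv.Perm.exists_comp_eq_of_map_univ_eq {α β : Type*} [Fintype α] [DecidableEq β]
    {x t : α → β} (h : Finset.univ.val.map x = Finset.univ.val.map t) :
    ∃ σ : Equiv.Perm α, x ∘ σ = t := by
  have e : ∀ v, {i // t i = v} ≃ {i // x i = v} := fun v =>
    Fintype.equivOfCardEq <| by
      simp only [Fintype.card_subtype, Finset.card, Finset.filter_val, eq_comm (b := v)]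
      simpa only [count_map] using congr_arg (count v) h.symm
  exact ⟨Equiv.ofFiberEquiv e, funext (Equiv.ofFiberEquiv_map e)⟩

theorem List.ofFn_getD_zero {R : Type*} [Zero R] {r : ℕ} (l : List R) (hl : l.length ≤ r) :
    List.ofFn (fun i : Fin r => l.getD i 0) = l ++ List.replicate (r - l.length) 0 := by
  apply List.ext_getElem (by simp; omega)
  intro i h1 h2
  simp only [List.getD_eq_getElem?_getD, List.getElem_ofFn, List.getElem_append,
    List.getElem_replicate]
  split_ifs <;> simp_all

theorem Multiset.eq_sum_replicate_count {α : Type*} [DecidableEq α] {s : Multiset α}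
    {S : Finset α} (h : ∀ v ∈ s, v ∈ S) : s = ∑ v ∈ S, replicate (s.count v) v := by
  conv_lhs => rw [← toFinset_sum_count_nsmul_eq s]
  simp only [nsmul_singleton]
  refine Finset.sum_subset (fun v hv => h v (mem_toFinset.1 hv)) fun v _ hv => ?_
  rw [count_eq_zero.2 (fun hv' => hv (mem_toFinset.2 hv')), replicate_zero]

theorem Multiset.sum_map_quadratic {R : Type*} [CommSemiring R] (s : Multiset R) (a b c : R) :
    (s.map fun v => a * v ^ 2 + b * v + c).sum
      = a * (s.map (· ^ 2)).sum + b * s.sum + card s * c := by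
  induction s using Multiset.induction_on with
  | empty => simp
  | cons v s ih => simp only [map_cons, sum_cons, ih, card_cons]; push_cast; ring

theorem Multiset.eq_replicate_add_replicate {α : Type*} [DecidableEq α] {s : Multiset α}
    {a b : α} (hab : a ≠ b) (h : ∀ v ∈ s, v = a ∨ v = b) :
    s = replicate (s.count a) a + replicate (s.count b) b := by
  rw [← Finset.sum_pair hab (f := fun v => replicate (s.count v) v)]
  exact eq_sum_replicate_count (by simpa using h)

/-- `d` and `s` are the `H`-coefficient and the multiset of `Q`-coefficients of a root. -/
def IsRootCoeffs (d : ℤ) (s : Multiset ℤ) : Prop :=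
  s.sum = -3 * d ∧ (s.map (· ^ 2)).sum = d ^ 2 + 2

namespace IsRootCoeffs

variable {d : ℤ} {s : Multiset ℤ}

theorem sum_map_quadratic (h : IsRootCoeffs d s) (b c : ℤ) :
    (s.map fun v => v ^ 2 + b * v + c).sum = d ^ 2 + 2 - 3 * b * d + card s * c := by
  have := Multiset.sum_map_quadratic s 1 b c
  simp only [one_mul] at this
  rw [this, h.1, h.2]
  ring

theorem le_three (h : IsRootCoeffs d s) (hd : 0 ≤ d) (hs : card s ≤ 8) : d ≤ 3 := by
  have hcs : 0 ≤ (s.map fun v => 9 * v ^ 2 + 6 * d * v + d ^ 2).sum :=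
    Multiset.sum_nonneg <| Multiset.forall_mem_map_iff.2 fun v _ => by
      nlinarith [sq_nonneg (3 * v + d)]
  have h12 : 0 ≤ (s.map fun v => v ^ 2 + 3 * v + 2).sum :=
    Multiset.sum_nonneg <| Multiset.forall_mem_map_iff.2 fun v _ => by
      nlinarith [sq_nonneg (2 * v + 3)]
  rw [Multiset.sum_map_quadratic, h.1, h.2] at hcs
  rw [h.sum_map_quadratic] at h12
  have hs' : (card s : ℤ) ≤ 8 := by exact_mod_cast hs
  have hd4 : d ≤ 4 := by nlinarith
  by_contra! hd3
  obtain rfl : d = 4 := by omega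
  linarith

/-- `ha` says that `∑ (v - a) (v - (a + 1)) ≤ 0`, a sum of products of consecutive integers. -/
theorem forall_mem_eq_or_eq_add_one (h : IsRootCoeffs d s) {a : ℤ}
    (ha : d ^ 2 + 2 + 3 * (2 * a + 1) * d + card s * (a * (a + 1)) ≤ 0) :
    ∀ v ∈ s, v = a ∨ v = a + 1 := by
  have hnonneg : ∀ v ∈ s.map (fun v => v ^ 2 + (-(2 * a + 1)) * v + a * (a + 1)), 0 ≤ v :=
    Multiset.forall_mem_map_iff.2 fun v _ => by rcases le_or_gt v a with hv | hv <;> nlinarith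
  have hsum := h.sum_map_quadratic (-(2 * a + 1)) (a * (a + 1))
  have hzero := Multiset.all_zero_of_le_zero_le_of_sum_eq_zero hnonneg
    (le_antisymm (by linarith) (Multiset.sum_nonneg hnonneg))
  intro v hv
  have hv0 : (v - a) * (v - (a + 1)) = 0 := by
    linarith [hzero _ (Multiset.mem_map_of_mem _ hv)]
  rcases mul_eq_zero.1 hv0 with h' | h' <;> omega

theorem eq_of_zero (h : IsRootCoeffs 0 s) : s = {1, -1} + replicate (card s - 2) 0 := by
  have hbound : ∀ v ∈ s, v ∈ ({1, -1, 0} : Finset ℤ) := by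
    intro v hv
    have := Multiset.single_le_sum (by simp [sq_nonneg]) _ (Multiset.mem_map_of_mem (· ^ 2) hv)
    rw [h.2] at this
    simp only [Finset.mem_insert, Finset.mem_singleton]
    have : -1 ≤ v ∧ v ≤ 1 := by constructor <;> nlinarith
    omega
  have hs := eq_sum_replicate_count hbound
  rw [Finset.sum_insert (by decide), Finset.sum_insert (by decide), Finset.sum_singleton] at hs
  have h1 := h.1
  have h2 := h.2
  have hc := congr_arg card hs
  rw [hs] at h1 h2
  simp only [Multiset.map_add, map_replicate, sum_add, sum_replicate, card_add,
    card_replicate] at h1 h2 hc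
  norm_num at h1 h2
  obtain ⟨hp, hn⟩ : count 1 s = 1 ∧ count (-1) s = 1 := by omega
  rw [hp, hn] at hs hc
  conv_lhs => rw [hs]
  rw [hc, show 1 + (1 + count 0 s) - 2 = count 0 s by omega]
  rfl

theorem eq_replicate_of_one_or_two {k : ℕ} (h : IsRootCoeffs k s) (hk : k = 1 ∨ k = 2) :
    3 * k ≤ card s ∧ s = replicate (3 * k) (-1) + replicate (card s - 3 * k) 0 := by
  have hvals := h.forall_mem_eq_or_eq_add_one (a := -1) (by rcases hk with rfl | rfl <;> norm_num)
  rw [neg_add_cancel] at hvals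
  have hs := Multiset.eq_replicate_add_replicate (by norm_num) hvals
  have h1 := h.1
  have hc := congr_arg card hs
  rw [hs] at h1
  simp only [sum_add, sum_replicate, card_add, card_replicate] at h1 hc
  norm_num at h1
  have hn : count (-1) s = 3 * k := by omega
  rw [hn] at hs hc
  refine ⟨by omega, ?_⟩
  conv_lhs => rw [hs]
  rw [hc, Nat.add_sub_cancel_left]

theorem eq_of_three (h : IsRootCoeffs 3 s) (hs : card s ≤ 8) :
    card s = 8 ∧ s = -2 ::ₘ replicate 7 (-1) := by
  have hs' : (card s : ℤ) ≤ 8 := by exact_mod_cast hs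
  have hvals := h.forall_mem_eq_or_eq_add_one (a := -2) (by linarith)
  norm_num at hvals
  have hs := Multiset.eq_replicate_add_replicate (by norm_num) hvals
  have h1 := h.1
  have h2 := h.2
  have hc := congr_arg card hs
  rw [hs] at h1 h2
  simp only [Multiset.map_add, map_replicate, sum_add, sum_replicate, card_add,
    card_replicate] at h1 h2 hc
  norm_num at h1 h2
  obtain ⟨hp, hn⟩ : count (-2) s = 1 ∧ count (-1) s = 7 := by omega
  rw [hp, hn] at hs hc
  exact ⟨hc, hs⟩

theorem eq_cases (h : IsRootCoeffs d s) (hd : 0 ≤ d) (hs : card s ≤ 8) :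
    (d = 0 ∧ s = {1, -1} + replicate (card s - 2) 0) ∨
    (d = 1 ∧ 3 ≤ card s ∧ s = replicate 3 (-1) + replicate (card s - 3) 0) ∨
    (d = 2 ∧ 6 ≤ card s ∧ s = replicate 6 (-1) + replicate (card s - 6) 0) ∨
    (d = 3 ∧ card s = 8 ∧ s = -2 ::ₘ replicate 7 (-1)) := by
  have hd3 := h.le_three hd hs
  interval_cases d
  · exact Or.inl ⟨rfl, h.eq_of_zero⟩
  · exact Or.inr <| Or.inl ⟨rfl, h.eq_replicate_of_one_or_two (k := 1) (Or.inl rfl)⟩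
  · exact Or.inr <| Or.inr <| Or.inl ⟨rfl, h.eq_replicate_of_one_or_two (k := 2) (Or.inr rfl)⟩
  · exact Or.inr <| Or.inr <| Or.inr ⟨rfl, h.eq_of_three hs⟩

end IsRootCoeffs

def qCoeffs {r : ℕ} (m : DP r) : Multiset ℤ := Finset.univ.val.map (Fin.tail m)

section qCoeffs

variable {r : ℕ}

@[simp]
theorem card_qCoeffs (m : DP r) : card (qCoeffs m) = r := by
  simp [qCoeffs]

theorem qCoeffs_ofCoeffs_cons (a : ℤ) {l : List ℤ} (hl : l.length ≤ r) :
    qCoeffs (r := r) (ofCoeffs (a :: l)) = (l : Multiset ℤ) + replicate (r - l.length) 0 := by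
  rw [qCoeffs, Fin.univ_val_map, ← Multiset.coe_replicate, Multiset.coe_add,
    ← List.ofFn_getD_zero l hl]
  rfl

@[simp]
theorem permAct_apply_zero (σ : Equiv.Perm (Fin r)) (m : DP r) : permAct σ m 0 = m 0 := rfl

@[simp]
theorem qCoeffs_permAct (σ : Equiv.Perm (Fin r)) (m : DP r) :
    qCoeffs (permAct σ m) = qCoeffs m := by
  conv_rhs => rw [qCoeffs, ← Multiset.map_univ_val_equiv σ, Multiset.map_map]
  rfl

theorem exists_permAct_eq_iff {m n : DP r} :
    (∃ σ, permAct σ m = n) ↔ m 0 = n 0 ∧ qCoeffs m = qCoeffs n := by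
  constructor
  · rintro ⟨σ, rfl⟩
    simp
  · rintro ⟨h0, hQ⟩
    obtain ⟨σ, hσ⟩ := Equiv.Perm.exists_comp_eq_of_map_univ_eq hQ
    refine ⟨σ, funext fun i => Fin.cases h0 (fun j => congr_fun hσ j) i⟩

theorem exists_permAct_eq_ofCoeffs_cons_iff {m : DP r} {a : ℤ} {l : List ℤ} (hl : l.length ≤ r) :
    (∃ σ, permAct σ m = ofCoeffs (a :: l)) ↔
      m 0 = a ∧ qCoeffs m = (l : Multiset ℤ) + replicate (r - l.length) 0 := by
  rw [exists_permAct_eq_iff, qCoeffs_ofCoeffs_cons a hl]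
  rfl

theorem sum_map_qCoeffs (f : ℤ → ℤ) (m : DP r) :
    ((qCoeffs m).map f).sum = ∑ i : Fin r, f (m i.succ) := by
  rw [qCoeffs, Multiset.map_map]
  rfl

theorem sum_qCoeffs (m : DP r) : (qCoeffs m).sum = ∑ i : Fin r, m i.succ := by
  simpa using sum_map_qCoeffs id m

theorem mem_RSet_iff {m : DP r} : m ∈ RSet r ↔ IsRootCoeffs (m 0) (qCoeffs m) := by
  rw [IsRootCoeffs, sum_qCoeffs, sum_map_qCoeffs]
  simp only [RSet, Set.mem_ofPred_eq, dpForm, dpK, Fin.val_zero, Fin.val_succ, if_true,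
    Nat.add_one_ne_zero, if_false, mul_one, sq]
  constructor <;> rintro ⟨h1, h2⟩ <;> constructor <;> linarith

theorem permAct_mem_RSet_iff (σ : Equiv.Perm (Fin r)) {m : DP r} :
    permAct σ m ∈ RSet r ↔ m ∈ RSet r := by
  simp [mem_RSet_iff]

theorem ofCoeffs_cons_mem_RSet_iff {a : ℤ} {l : List ℤ} (hl : l.length ≤ r) :
    ofCoeffs (a :: l) ∈ RSet r ↔
      IsRootCoeffs a ((l : Multiset ℤ) + replicate (r - l.length) 0) := by
  rw [mem_RSet_iff, qCoeffs_ofCoeffs_cons a hl]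
  rfl

theorem smul_mem_RSet_iff {ε : ℤ} (hε : ε = 1 ∨ ε = -1) {m : DP r} :
    ε • m ∈ RSet r ↔ m ∈ RSet r := by
  rcases hε with rfl | rfl
  · rw [one_smul]
  · simp only [RSet, dpForm, neg_smul, one_smul, Pi.neg_apply, neg_mul, neg_neg, mul_neg,
      Finset.sum_neg_distrib, Set.mem_ofPred_eq, sub_neg_eq_add]
    constructor <;> rintro ⟨h1, h2⟩ <;> constructor <;> linarith

end qCoeffs

/-- Characterization of the roots up to sign and permutation of the `Q_i`. -/
theorem mem_rootSet_iff (r : ℕ) (h2 : 2 ≤ r) (h8 : r ≤ 8) (m : DP r) :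
    m ∈ RSet r ↔
      ∃ ε : ℤ, (ε = 1 ∨ ε = -1) ∧ ∃ σ : Equiv.Perm (Fin r),
        (permAct σ (ε • m) = ofCoeffs [0, 1, -1] ∨
         (3 ≤ r ∧ permAct σ (ε • m) = ofCoeffs [1, -1, -1, -1]) ∨
         (6 ≤ r ∧ permAct σ (ε • m) = ofCoeffs [2, -1, -1, -1, -1, -1, -1]) ∨
         (r = 8 ∧ permAct σ (ε • m) =
            ofCoeffs [3, -2, -1, -1, -1, -1, -1, -1, -1])) := by
  constructor
  · intro hm
    obtain ⟨ε, hε, hpos⟩ : ∃ ε : ℤ, (ε = 1 ∨ ε = -1) ∧ 0 ≤ (ε • m) 0 := by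
      rcases le_total 0 (m 0) with h | h
      exacts [⟨1, Or.inl rfl, by simpa⟩, ⟨-1, Or.inr rfl, by simpa⟩]
    have hroot := mem_RSet_iff.1 ((smul_mem_RSet_iff hε).2 hm)
    refine ⟨ε, hε, ?_⟩
    rcases hroot.eq_cases hpos (by simpa using h8) with
      ⟨hd, hs⟩ | ⟨hd, hr, hs⟩ | ⟨hd, hr, hs⟩ | ⟨hd, hr, hs⟩ <;> rw [card_qCoeffs] at *
    · obtain ⟨σ, hσ⟩ := (exists_permAct_eq_ofCoeffs_cons_iff (l := [1, -1]) h2).2 ⟨hd, hs⟩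
      exact ⟨σ, Or.inl hσ⟩
    · obtain ⟨σ, hσ⟩ := (exists_permAct_eq_ofCoeffs_cons_iff (l := [-1, -1, -1]) hr).2 ⟨hd, hs⟩
      exact ⟨σ, Or.inr (Or.inl ⟨hr, hσ⟩)⟩
    · obtain ⟨σ, hσ⟩ :=
        (exists_permAct_eq_ofCoeffs_cons_iff (l := [-1, -1, -1, -1, -1, -1]) hr).2 ⟨hd, hs⟩
      exact ⟨σ, Or.inr (Or.inr (Or.inl ⟨hr, hσ⟩))⟩
    · subst hr
      obtain ⟨σ, hσ⟩ :=
        (exists_permAct_eq_ofCoeffs_cons_iff (l := [-2, -1, -1, -1, -1, -1, -1, -1]) le_rfl).2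
          ⟨hd, hs⟩
      exact ⟨σ, Or.inr (Or.inr (Or.inr ⟨rfl, hσ⟩))⟩
  · rintro ⟨ε, hε, σ, h | ⟨hr, h⟩ | ⟨hr, h⟩ | ⟨hr, h⟩⟩ <;>
      rw [← smul_mem_RSet_iff hε, ← permAct_mem_RSet_iff σ, h,
        ofCoeffs_cons_mem_RSet_iff (by simp; omega)] <;>
      simp [IsRootCoeffs]
end

section
/- Let 2 ≤ r ≤ 8. An element m ∈ M_r lies in the Del Pezzo two-set G_r = {m : ⟨m,k⟩ = −2, ⟨m,m⟩ = 0} if and only if there is a permutation of the coordinates Q_1, …, Q_r after which m equals one of the following (where an entry with Q_j for j > r is only possible when r admits it): (1) H − Q_1; (2) 2H − Q_1 − Q_2 − Q_3 − Q_4 (only r ≥ 4); (3) 3H − 2Q_1 − Q_2 − Q_3 − Q_4 − Q_5 − Q_6 (only r ≥ 6); (4) 4H − 2Q_1 − 2Q_2 − 2Q_3 − Q_4 − Q_5 − Q_6 − Q_7 (only r ≥ 7); (5) 5H − 2Q_1 − 2Q_2 − 2Q_3 − 2Q_4 − 2Q_5 − 2Q_6 − Q_7 (only r ≥ 7); and,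 only when r = 8: (6) 4H − 3Q_1 − Q_2 − ⋯ − Q_8; (7) 5H − 3Q_1 − 2Q_2 − 2Q_3 − 2Q_4 − Q_5 − Q_6 − Q_7 − Q_8; (8) 6H − 3Q_1 − 3Q_2 − 2Q_3 − 2Q_4 − 2Q_5 − 2Q_6 − Q_7 − Q_8; (9) 7H − 3Q_1 − 3Q_2 − 3Q_3 − 3Q_4 − 2Q_5 − 2Q_6 − 2Q_7 − Q_8; (10) 7H − 4Q_1 − 3Q_2 − 2Q_3 − 2Q_4 − 2Q_5 − 2Q_6 − 2Q_7 − 2Q_8; (11) 8H − 3Q_1 − 3Q_2 − 3Q_3 − 3Q_4 − 3Q_5 − 3Q_6 − 3Q_7 − Q_8; (12) 8H − 4Q_1 − 3Q_2 − 3Q_3 − 3Q_4 − 3Q_5 − 2Q_6 − 2Q_7 − 2Q_8; (13) 9H − 4Q_1 − 4Q_2 − 3Q_3 − 3Q_4 − 3Q_5 − 3Q_6 − 3Q_7 − 2Q_8; (14) 10H − 4Q_1 − 4Q_2 − 4Q_3 − 4Q_4 − 3Q_5 − 3Q_6 − 3Q_7 − 3Q_8; (15) 11H − 4Q_1 − 4Q_2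 − 4Q_3 − 4Q_4 − 4Q_5 − 4Q_6 − 4Q_7 − 3Q_8. -/
/-- The Del Pezzo two-set `G_r = {m : ⟨m,k⟩ = -2, ⟨m,m⟩ = 0}`. -/
def GSet (r : ℕ) : Set (DP r) := {m | dpForm m (dpK r) = -2 ∧ dpForm m m = 0}

/-!
Permuting the `Q_i` preserves the form and fixes `k`, so we may assume that the coefficients
`x_1 ≤ ⋯ ≤ x_r` of `m = d H + ∑ x_i Q_i` are sorted. Then `m ∈ G_r` says `∑ x_i = 2 - 3d` and
`∑ x_i² = d²`. Cauchy–Schwarz gives `(2 - 3d)² ≤ r d² ≤ 8 d²`, hence `1 ≤ d ≤ 11`, and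
`x_i² ≤ d²` gives `x_i ≥ -d`. This leaves finitely many sorted coefficient lists; they are
enumerated by a pruned search and compared with the table by the kernel, for each `r ≤ 8`.
-/

section

variable {r : ℕ}

theorem mem_GSet_iff_forms {m : DP r} :
    m ∈ GSet r ↔ dpForm m (dpK r) = -2 ∧ dpForm m m = 0 := Iff.rfl

theorem dpForm_permAct (σ : Equiv.Perm (Fin r)) (v w : DP r) :
    dpForm (permAct σ v) (permAct σ w) = dpForm v w := by
  simp only [dpForm, permAct, Fin.cons_zero, Fin.cons_succ]
  rw [Equiv.sum_comp σ fun j => v j.succ * w j.succ]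

theorem permAct_dpK (σ : Equiv.Perm (Fin r)) : permAct σ (dpK r) = dpK r := by
  ext i
  cases i using Fin.cases <;> simp [permAct, dpK]

theorem permAct_mem_GSet_iff (σ : Equiv.Perm (Fin r)) {m : DP r} :
    permAct σ m ∈ GSet r ↔ m ∈ GSet r := by
  have hk := dpForm_permAct σ m (dpK r)
  rw [permAct_dpK] at hk
  simp only [mem_GSet_iff_forms, hk, dpForm_permAct]

theorem exists_monotone_permAct (m : DP r) :
    ∃ σ : Equiv.Perm (Fin r), Monotone fun j : Fin r => permAct σ m j.succ :=
  ⟨_, Tuple.monotone_sort fun j : Fin r => m j.succ⟩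

theorem eq_ofCoeffs_cons_ofFn (c : DP r) :
    c = ofCoeffs (c 0 :: List.ofFn fun j : Fin r => c j.succ) := by
  ext i
  cases i using Fin.cases <;> simp [ofCoeffs]

theorem mem_GSet_iff_sums {m : DP r} :
    m ∈ GSet r ↔ ∑ j : Fin r, m j.succ = 2 - 3 * m 0 ∧ ∑ j : Fin r, m j.succ ^ 2 = m 0 ^ 2 := by
  simp only [mem_GSet_iff_forms, dpForm, dpK, Fin.val_zero, Fin.val_succ, Nat.add_one_ne_zero,
    if_pos, if_false, mul_one, sq]
  constructor <;> rintro ⟨h1, h2⟩ <;> constructor <;> linarith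

theorem sq_le_sq_of_mem_GSet {m : DP r} (hm : m ∈ GSet r) (j : Fin r) :
    m j.succ ^ 2 ≤ m 0 ^ 2 := by
  rw [← (mem_GSet_iff_sums.1 hm).2]
  exact Finset.single_le_sum (fun i _ => sq_nonneg (m i.succ)) (Finset.mem_univ j)

theorem one_le_and_le_eleven_of_mem_GSet (hr : r ≤ 8) {m : DP r} (hm : m ∈ GSet r) :
    1 ≤ m 0 ∧ m 0 ≤ 11 := by
  obtain ⟨hsum, hsq⟩ := mem_GSet_iff_sums.1 hm
  have hcs := sq_sum_le_card_mul_sum_sq (s := Finset.univ) (f := fun j : Fin r => m j.succ)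
  rw [hsum, hsq, Finset.card_univ, Fintype.card_fin] at hcs
  have h8 : (2 - 3 * m 0) ^ 2 ≤ 8 * m 0 ^ 2 :=
    hcs.trans (mul_le_mul_of_nonneg_right (by exact_mod_cast hr) (sq_nonneg _))
  constructor <;> nlinarith

/-- The nondecreasing lists of `k` integers `≥ lo` with sum `s` and sum of squares `q`. The head
of such a list is its minimum, hence at most `s / k`, which bounds the search. -/
def sortedSols : ℕ → ℤ → ℤ → ℤ → List (List ℤ)
  | 0, _, s, q => if s = 0 ∧ q = 0 then [[]] else []
  | k + 1, lo, s, q =>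
    ((List.range (s / (k + 1) + 1 - lo).toNat).map fun n : ℕ => lo + n).flatMap fun x =>
      if x ^ 2 ≤ q then (sortedSols k x (s - x) (q - x ^ 2)).map (x :: ·) else []

theorem mem_sortedSols {lo : ℤ} {xs : List ℤ} (hsorted : xs.Pairwise (· ≤ ·))
    (hlo : ∀ y ∈ xs, lo ≤ y) :
    xs ∈ sortedSols xs.length lo xs.sum (xs.map (· ^ 2)).sum := by
  induction xs generalizing lo with
  | nil => simp [sortedSols]
  | cons x t ih =>
    obtain ⟨hxt, ht⟩ := List.pairwise_cons.1 hsorted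
    have hlox : lo ≤ x := hlo x List.mem_cons_self
    have hmin : t.length • x ≤ t.sum := List.card_nsmul_le_sum t x hxt
    have hsq : 0 ≤ (t.map (· ^ 2)).sum := List.sum_nonneg (by simp [sq_nonneg])
    have hxle : x ≤ (x + t.sum) / (t.length + 1) := by
      rw [Int.le_ediv_iff_mul_le (by positivity)]
      simp only [nsmul_eq_mul] at hmin
      linarith
    simp only [List.length_cons, List.sum_cons, List.map_cons, sortedSols]
    refine List.mem_flatMap.2 ⟨x, List.mem_map.2 ⟨(x - lo).toNat, List.mem_range.2 ?_, ?_⟩, ?_⟩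
    · omega
    · omega
    rw [if_pos (by linarith), add_sub_cancel_left, add_sub_cancel_left]
    exact List.mem_map_of_mem (ih ht hxt)

def twoSetCandidates (r : ℕ) : List (List ℤ) :=
  (List.range' 1 11).flatMap fun n : ℕ =>
    (sortedSols r (-n) (2 - 3 * n) (n ^ 2)).map ((n : ℤ) :: ·)

theorem coeffs_mem_twoSetCandidates (hr : r ≤ 8) {c : DP r} (hc : c ∈ GSet r)
    (hmono : Monotone fun j : Fin r => c j.succ) :
    c 0 :: List.ofFn (fun j : Fin r => c j.succ) ∈ twoSetCandidates r := by
  obtain ⟨hsum, hsq⟩ := mem_GSet_iff_sums.1 hc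
  obtain ⟨hd1, hd11⟩ := one_le_and_le_eleven_of_mem_GSet hr hc
  have hsorted : (List.ofFn fun j : Fin r => c j.succ).Pairwise (· ≤ ·) :=
    List.pairwise_ofFn.2 fun i j hij => hmono hij.le
  have hlo : ∀ y ∈ List.ofFn (fun j : Fin r => c j.succ), -c 0 ≤ y := by
    simp only [List.mem_ofFn, forall_exists_index]
    rintro y j rfl
    exact (abs_le_of_sq_le_sq' (sq_le_sq_of_mem_GSet hc j) (by omega)).1
  have hsols := mem_sortedSols hsorted hlo
  rw [List.length_ofFn, List.sum_ofFn, List.map_ofFn, List.sum_ofFn] at hsols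
  refine List.mem_flatMap.2 ⟨(c 0).toNat, List.mem_range'_1.2 ?_, ?_⟩
  · omega
  rw [Int.toNat_of_nonneg (by omega)]
  exact List.mem_map_of_mem (by simpa [hsum, hsq] using hsols)

def IsTwoSetNormalForm (r : ℕ) (c : DP r) : Prop :=
  c = ofCoeffs [1, -1] ∨
  (4 ≤ r ∧ c = ofCoeffs [2, -1, -1, -1, -1]) ∨
  (6 ≤ r ∧ c = ofCoeffs [3, -2, -1, -1, -1, -1, -1]) ∨
  (7 ≤ r ∧ c = ofCoeffs [4, -2, -2, -2, -1, -1, -1, -1]) ∨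
  (7 ≤ r ∧ c = ofCoeffs [5, -2, -2, -2, -2, -2, -2, -1]) ∨
  (r = 8 ∧ c = ofCoeffs [4, -3, -1, -1, -1, -1, -1, -1, -1]) ∨
  (r = 8 ∧ c = ofCoeffs [5, -3, -2, -2, -2, -1, -1, -1, -1]) ∨
  (r = 8 ∧ c = ofCoeffs [6, -3, -3, -2, -2, -2, -2, -1, -1]) ∨
  (r = 8 ∧ c = ofCoeffs [7, -3, -3, -3, -3, -2, -2, -2, -1]) ∨
  (r = 8 ∧ c = ofCoeffs [7, -4, -3, -2, -2, -2, -2, -2, -2]) ∨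
  (r = 8 ∧ c = ofCoeffs [8, -3, -3, -3, -3, -3, -3, -3, -1]) ∨
  (r = 8 ∧ c = ofCoeffs [8, -4, -3, -3, -3, -3, -2, -2, -2]) ∨
  (r = 8 ∧ c = ofCoeffs [9, -4, -4, -3, -3, -3, -3, -3, -2]) ∨
  (r = 8 ∧ c = ofCoeffs [10, -4, -4, -4, -4, -3, -3, -3, -3]) ∨
  (r = 8 ∧ c = ofCoeffs [11, -4, -4, -4, -4, -4, -4, -4, -3])

instance (r : ℕ) : DecidablePred (IsTwoSetNormalForm r) := fun c => by
  unfold IsTwoSetNormalForm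
  infer_instance

theorem isTwoSetNormalForm_of_mem_twoSetCandidates (hr : r ≤ 8) :
    ∀ l ∈ twoSetCandidates r, IsTwoSetNormalForm r (ofCoeffs l) := by
  interval_cases r <;> decide

theorem mem_GSet_of_isTwoSetNormalForm (h1 : 1 ≤ r) (h8 : r ≤ 8) {c : DP r}
    (hc : IsTwoSetNormalForm r c) : c ∈ GSet r := by
  rw [mem_GSet_iff_forms]
  -- `omega` discards the table entries whose condition on `r` fails
  interval_cases r <;>
  rcases hc with rfl | ⟨_, rfl⟩ | ⟨_, rfl⟩ | ⟨_, rfl⟩ | ⟨_, rfl⟩ | ⟨_, rfl⟩ | ⟨_, rfl⟩ |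
    ⟨_, rfl⟩ | ⟨_, rfl⟩ | ⟨_, rfl⟩ | ⟨_, rfl⟩ | ⟨_, rfl⟩ | ⟨_, rfl⟩ | ⟨_, rfl⟩ | ⟨_, rfl⟩ <;>
  first | decide | omega

end

/-- Characterization of the Del Pezzo two-set up to permutation of the `Q_i`. -/
theorem mem_GSet_iff (r : ℕ) (h2 : 2 ≤ r) (h8 : r ≤ 8) (m : DP r) :
    m ∈ GSet r ↔
      ∃ σ : Equiv.Perm (Fin r),
        (permAct σ m = ofCoeffs [1, -1] ∨
         (4 ≤ r ∧ permAct σ m = ofCoeffs [2, -1, -1, -1, -1]) ∨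
         (6 ≤ r ∧ permAct σ m = ofCoeffs [3, -2, -1, -1, -1, -1, -1]) ∨
         (7 ≤ r ∧ permAct σ m = ofCoeffs [4, -2, -2, -2, -1, -1, -1, -1]) ∨
         (7 ≤ r ∧ permAct σ m = ofCoeffs [5, -2, -2, -2, -2, -2, -2, -1]) ∨
         (r = 8 ∧ permAct σ m = ofCoeffs [4, -3, -1, -1, -1, -1, -1, -1, -1]) ∨
         (r = 8 ∧ permAct σ m = ofCoeffs [5, -3, -2, -2, -2, -1, -1, -1, -1]) ∨
         (r = 8 ∧ permAct σ m = ofCoeffs [6, -3, -3, -2, -2, -2, -2, -1, -1]) ∨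
         (r = 8 ∧ permAct σ m = ofCoeffs [7, -3, -3, -3, -3, -2, -2, -2, -1]) ∨
         (r = 8 ∧ permAct σ m = ofCoeffs [7, -4, -3, -2, -2, -2, -2, -2, -2]) ∨
         (r = 8 ∧ permAct σ m = ofCoeffs [8, -3, -3, -3, -3, -3, -3, -3, -1]) ∨
         (r = 8 ∧ permAct σ m = ofCoeffs [8, -4, -3, -3, -3, -3, -2, -2, -2]) ∨
         (r = 8 ∧ permAct σ m = ofCoeffs [9, -4, -4, -3, -3, -3, -3, -3, -2]) ∨
         (r = 8 ∧ permAct σ m = ofCoeffs [10, -4, -4, -4, -4, -3, -3, -3, -3]) ∨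
         (r = 8 ∧ permAct σ m = ofCoeffs [11, -4, -4, -4, -4, -4, -4, -4, -3])) := by
  constructor
  · intro hm
    obtain ⟨σ, hσ⟩ := exists_monotone_permAct m
    refine ⟨σ, ?_⟩
    rw [eq_ofCoeffs_cons_ofFn (permAct σ m)]
    exact isTwoSetNormalForm_of_mem_twoSetCandidates h8 _
      (coeffs_mem_twoSetCandidates h8 ((permAct_mem_GSet_iff σ).2 hm) hσ)
  · rintro ⟨σ, hσ⟩
    exact (permAct_mem_GSet_iff σ).1 (mem_GSet_of_isTwoSetNormalForm (by omega) h8 hσ)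
end

section
/- Let σ : M_3 → M_3 be the ℤ-linear map determined by σ(H) = 2H − Q_1 − Q_2 − Q_3, σ(Q_1) = H − Q_2 − Q_3, σ(Q_2) = H − Q_1 − Q_3, σ(Q_3) = H − Q_1 − Q_2. Then σ is an involution preserving the bilinear form with σ(k) = k, and the numbers of σ-fixed elements in the Del Pezzo sets are: exactly 6 fixed elements in R_3, exactly 0 fixed elements in E_3, and exactly 3 fixed elements in G_3. -/
/-- The Del Pezzo one-set `E_r = {m : ⟨m,k⟩ = -1, ⟨m,m⟩ = -1}`. -/
def ESet (r : ℕ) : Set (DP r) := {m | dpForm m (dpK r) = -1 ∧ dpForm m m = -1}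

/-!
The map `σ` is the reflection `v ↦ v + ⟨v, d⟩ d` in the root `d = H - Q_1 - Q_2 - Q_3`, so it is
an isometric involution, and it fixes `k` because `⟨k, d⟩ = 0`. Its fixed vectors are the `m`
orthogonal to `d`, i.e. with `m_0 + m_1 + m_2 + m_3 = 0`, and for those `⟨m, k⟩ = -2 m_0`.
Hence no element of `E_3` is fixed (parity), a fixed root has `m_0 = 0` and
`(m_1, m_2, m_3)` a permutation of `(1, -1, 0)`, and a fixed element of `G_3` has `m_0 = 1`
and exactly one `Q`-coefficient equal to `-1`.
-/

section Reflection

variable {r : ℕ}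

lemma dpForm_comm (v w : DP r) : dpForm v w = dpForm w v := by
  simp only [dpForm, mul_comm]

lemma dpForm_add_left (u v w : DP r) : dpForm (u + v) w = dpForm u w + dpForm v w := by
  simp only [dpForm, Pi.add_apply, add_mul, Finset.sum_add_distrib]
  ring

lemma dpForm_smul_left (a : ℤ) (v w : DP r) : dpForm (a • v) w = a * dpForm v w := by
  simp only [dpForm, Pi.smul_apply, smul_eq_mul, mul_assoc, ← Finset.mul_sum]
  ring

lemma dpForm_add_right (u v w : DP r) : dpForm u (v + w) = dpForm u v + dpForm u w := by
  rw [dpForm_comm, dpForm_add_left, dpForm_comm v, dpForm_comm w]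

lemma dpForm_smul_right (a : ℤ) (v w : DP r) : dpForm v (a • w) = a * dpForm v w := by
  rw [dpForm_comm, dpForm_smul_left, dpForm_comm]

def dpReflection (d : DP r) : DP r →ₗ[ℤ] DP r where
  toFun v := v + dpForm v d • d
  map_add' u v := by
    simp only [dpForm_add_left, add_smul]
    abel
  map_smul' a v := by
    simp only [dpForm_smul_left, smul_add, mul_smul, RingHom.id_apply]

lemma dpReflection_apply (d v : DP r) : dpReflection d v = v + dpForm v d • d := rfl

variable {d : DP r}

lemma dpForm_dpReflection_root (hd : dpForm d d = -2) (v : DP r) :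
    dpForm (dpReflection d v) d = -dpForm v d := by
  rw [dpReflection_apply, dpForm_add_left, dpForm_smul_left, hd]
  ring

lemma dpReflection_dpReflection (hd : dpForm d d = -2) (v : DP r) :
    dpReflection d (dpReflection d v) = v := by
  rw [dpReflection_apply (v := dpReflection d v), dpForm_dpReflection_root hd, dpReflection_apply,
    neg_smul, add_neg_cancel_right]

lemma dpForm_dpReflection (hd : dpForm d d = -2) (v w : DP r) :
    dpForm (dpReflection d v) (dpReflection d w) = dpForm v w := by
  simp only [dpReflection_apply, dpForm_add_left, dpForm_add_right, dpForm_smul_left,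
    dpForm_smul_right, hd, dpForm_comm d w]
  ring

lemma dpReflection_eq_self_iff (hd : dpForm d d = -2) (v : DP r) :
    dpReflection d v = v ↔ dpForm v d = 0 := by
  have hd0 : d ≠ 0 := by
    rintro rfl
    simp [dpForm] at hd
  rw [dpReflection_apply, add_eq_left, smul_eq_zero, or_iff_left hd0]

end Reflection

lemma dpForm_three (v w : DP 3) :
    dpForm v w = v 0 * w 0 - v 1 * w 1 - v 2 * w 2 - v 3 * w 3 := by
  simp only [dpForm, Fin.sum_univ_three]
  ring_nf
  rfl

/-- The root `H - Q_1 - Q_2 - Q_3`; reflection in it is the action of the standard quadratic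
Cremona transformation on `M_3`. -/
def cremonaRoot : DP 3 := ![1, -1, -1, -1]

lemma dpForm_cremonaRoot_self : dpForm cremonaRoot cremonaRoot = -2 := by
  decide

lemma dpForm_dpK_cremonaRoot : dpForm (dpK 3) cremonaRoot = 0 := by
  decide

lemma eq_dpReflection_cremonaRoot (σ : DP 3 →ₗ[ℤ] DP 3)
    (hH : σ (Pi.single 0 1) = ofCoeffs [2, -1, -1, -1])
    (hQ1 : σ (Pi.single 1 1) = ofCoeffs [1, 0, -1, -1])
    (hQ2 : σ (Pi.single 2 1) = ofCoeffs [1, -1, 0, -1])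
    (hQ3 : σ (Pi.single 3 1) = ofCoeffs [1, -1, -1, 0]) :
    σ = dpReflection cremonaRoot := by
  refine (Pi.basisFun ℤ (Fin 4)).ext fun i => ?_
  rw [Pi.basisFun_apply]
  fin_cases i
  · exact hH.trans (by decide)
  · exact hQ1.trans (by decide)
  · exact hQ2.trans (by decide)
  · exact hQ3.trans (by decide)

lemma dpForm_cremonaRoot (m : DP 3) : dpForm m cremonaRoot = m 0 + m 1 + m 2 + m 3 := by
  simp [dpForm_three, cremonaRoot]

lemma dpForm_dpK_three (m : DP 3) : dpForm m (dpK 3) = -3 * m 0 - m 1 - m 2 - m 3 := by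
  simp [dpForm_three, dpK]
  ring

lemma exists_eq_vec_four (m : DP 3) : ∃ a b c e : ℤ, m = ![a, b, c, e] :=
  ⟨m 0, m 1, m 2, m 3, by ext i; fin_cases i <;> rfl⟩

lemma bounds_of_sum_mul_self_le_two {b c e : ℤ} (h : b * b + c * c + e * e ≤ 2) :
    (-1 ≤ b ∧ b ≤ 1) ∧ (-1 ≤ c ∧ c ≤ 1) ∧ (-1 ≤ e ∧ e ≤ 1) := by
  refine ⟨⟨?_, ?_⟩, ⟨?_, ?_⟩, ⟨?_, ?_⟩⟩ <;>
    nlinarith [mul_self_nonneg b, mul_self_nonneg c, mul_self_nonneg e]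

lemma sep_RSet_orthogonal_cremonaRoot :
    {m ∈ RSet 3 | dpForm m cremonaRoot = 0} =
      ↑({![0, 1, -1, 0], ![0, 1, 0, -1], ![0, -1, 1, 0], ![0, 0, 1, -1], ![0, -1, 0, 1],
        ![0, 0, -1, 1]} : Finset (DP 3)) := by
  ext m
  simp only [RSet, Set.mem_ofPred_eq, Finset.mem_coe]
  constructor
  · rintro ⟨⟨hk, hm⟩, hd⟩
    obtain ⟨a, b, c, e, rfl⟩ := exists_eq_vec_four m
    rw [dpForm_dpK_three] at hk
    rw [dpForm_three] at hm
    rw [dpForm_cremonaRoot] at hd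
    simp only [Matrix.cons_val_zero, Matrix.cons_val_one, Matrix.cons_val] at hk hm hd
    obtain rfl : a = 0 := by linarith
    obtain ⟨⟨hb₁, hb₂⟩, ⟨hc₁, hc₂⟩, ⟨he₁, he₂⟩⟩ :=
      bounds_of_sum_mul_self_le_two (b := b) (c := c) (e := e) (by linarith)
    interval_cases b <;> interval_cases c <;> interval_cases e <;> first | omega | decide
  · intro h
    fin_cases h <;> decide

lemma sep_ESet_orthogonal_cremonaRoot :
    {m ∈ ESet 3 | dpForm m cremonaRoot = 0} = ∅ := by
  refine Set.eq_empty_of_forall_notMem fun m ⟨⟨hk, _⟩, hd⟩ => ?_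
  rw [dpForm_dpK_three] at hk
  rw [dpForm_cremonaRoot] at hd
  omega

lemma sep_GSet_orthogonal_cremonaRoot :
    {m ∈ GSet 3 | dpForm m cremonaRoot = 0} =
      ↑({![1, -1, 0, 0], ![1, 0, -1, 0], ![1, 0, 0, -1]} : Finset (DP 3)) := by
  ext m
  simp only [GSet, Set.mem_ofPred_eq, Finset.mem_coe]
  constructor
  · rintro ⟨⟨hk, hm⟩, hd⟩
    obtain ⟨a, b, c, e, rfl⟩ := exists_eq_vec_four m
    rw [dpForm_dpK_three] at hk
    rw [dpForm_three] at hm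
    rw [dpForm_cremonaRoot] at hd
    simp only [Matrix.cons_val_zero, Matrix.cons_val_one, Matrix.cons_val] at hk hm hd
    obtain rfl : a = 1 := by linarith
    obtain ⟨⟨hb₁, hb₂⟩, ⟨hc₁, hc₂⟩, ⟨he₁, he₂⟩⟩ :=
      bounds_of_sum_mul_self_le_two (b := b) (c := c) (e := e) (by linarith)
    interval_cases b <;> interval_cases c <;> interval_cases e <;> first | omega | decide
  · intro h
    fin_cases h <;> decide

/-- The real structure on `M_3` of type `2A1` (degree 6): counts of fixed
elements in the Del Pezzo sets. -/
theorem realStructure_deg6 (σ : (Fin 4 → ℤ) →ₗ[ℤ] (Fin 4 → ℤ))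
    (hH : σ (Pi.single 0 1) = ofCoeffs [2, -1, -1, -1])
    (hQ1 : σ (Pi.single 1 1) = ofCoeffs [1, 0, -1, -1])
    (hQ2 : σ (Pi.single 2 1) = ofCoeffs [1, -1, 0, -1])
    (hQ3 : σ (Pi.single 3 1) = ofCoeffs [1, -1, -1, 0]) :
    (∀ v : DP 3, σ (σ v) = v) ∧
    (∀ v w : DP 3, dpForm (σ v) (σ w) = dpForm v w) ∧
    σ (dpK 3) = dpK 3 ∧
    {m ∈ RSet 3 | σ m = m}.ncard = 6 ∧
    {m ∈ ESet 3 | σ m = m}.ncard = 0 ∧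
    {m ∈ GSet 3 | σ m = m}.ncard = 3 := by
  obtain rfl := eq_dpReflection_cremonaRoot σ hH hQ1 hQ2 hQ3
  have hd := dpForm_cremonaRoot_self
  simp only [dpReflection_eq_self_iff hd]
  refine ⟨dpReflection_dpReflection hd, dpForm_dpReflection hd, dpForm_dpK_cremonaRoot, ?_, ?_, ?_⟩
  · rw [sep_RSet_orthogonal_cremonaRoot, Set.ncard_coe_finset]
    decide
  · rw [sep_ESet_orthogonal_cremonaRoot, Set.ncard_empty]
  · rw [sep_GSet_orthogonal_cremonaRoot, Set.ncard_coe_finset]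
    decide
end

section
/- Let σ : M_5 → M_5 be the ℤ-linear map determined by σ(H) = 2H − Q_1 − Q_2 − Q_3, σ(Q_1) = H − Q_2 − Q_3, σ(Q_2) = H − Q_1 − Q_3, σ(Q_3) = H − Q_1 − Q_2, σ(Q_4) = Q_5, σ(Q_5) = Q_4. Then σ is an involution preserving the bilinear form with σ(k) = k, and the numbers of σ-fixed elements in the Del Pezzo sets are: exactly 12 fixed elements in R_5, exactly 0 fixed elements in E_5, and exactly 6 fixed elements in G_5. -/
/-! The matrix of `σ` squares to `1` and is an isometry of the Gram matrix `diag(1, -1, …, -1)`.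
A vector `m` is `σ`-fixed iff `m₀ + m₁ + m₂ + m₃ = 0` and `m₄ = m₅`; on such vectors
`⟨m, k⟩ = -2 (m₀ + m₄)` is even, so no element of `E₅` is fixed. A fixed `m` with `⟨m, k⟩ = -2u`
has `m₄ = m₅ = u - m₀`, and `x = (m₀ - 2u, m₁, m₂, m₃)` identifies the fixed `m` with
`⟨m, m⟩ = 2u² - 2` with the vectors `x ∈ ℤ⁴` of norm `2` and coordinate sum `-2u`.
For `u = 0` these are the `12` roots `eᵢ - eⱼ` (`i ≠ j`) of `A₃`, for `u = 1` the `6` vectors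
`-eᵢ - eⱼ` (`i < j`). -/

open Matrix

def dpGram (r : ℕ) : Matrix (Fin (r + 1)) (Fin (r + 1)) ℤ :=
  diagonal fun i => if i = 0 then 1 else -1

lemma dpForm_eq_dotProduct {r : ℕ} (v w : DP r) : dpForm v w = v ⬝ᵥ (dpGram r *ᵥ w) := by
  simp [dpForm, dpGram, dotProduct, Fin.sum_univ_succ, mulVec_diagonal, sub_eq_add_neg]

lemma dpForm_mulVec_mulVec {r : ℕ} {A : Matrix (Fin (r + 1)) (Fin (r + 1)) ℤ}
    (hA : Aᵀ * dpGram r * A = dpGram r) (v w : DP r) :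
    dpForm (A *ᵥ v) (A *ᵥ w) = dpForm v w := by
  rw [dpForm_eq_dotProduct, dpForm_eq_dotProduct]
  conv_rhs => rw [← hA, ← mulVec_mulVec, ← mulVec_mulVec, dotProduct_mulVec, vecMul_transpose]

lemma dpForm_dpK {r : ℕ} (m : DP r) : dpForm m (dpK r) = -3 * m 0 - ∑ i : Fin r, m i.succ := by
  simp [dpForm, dpK, mul_comm]

lemma dpForm_dpK_five (m : DP 5) :
    dpForm m (dpK 5) = -3 * m 0 - (m 1 + m 2 + m 3 + m 4 + m 5) := by
  simp only [dpForm_dpK, Fin.sum_univ_five, Fin.succ_zero_eq_one, Fin.succ_one_eq_two, Fin.reduceSucc]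

lemma dpForm_self_five (m : DP 5) :
    dpForm m m = m 0 ^ 2 - (m 1 ^ 2 + m 2 ^ 2 + m 3 ^ 2 + m 4 ^ 2 + m 5 ^ 2) := by
  simp only [dpForm, Fin.sum_univ_five, Fin.succ_zero_eq_one, Fin.succ_one_eq_two, Fin.reduceSucc]
  ring

def shortVectors (n : ℕ) (s : ℤ) : Set (Fin n → ℤ) := {x | ∑ i, x i ^ 2 = 2 ∧ ∑ i, x i = s}

lemma shortVectors_subset_piFinset (n : ℕ) (s : ℤ) :
    shortVectors n s ⊆ (Fintype.piFinset fun _ : Fin n => Finset.Icc (-1 : ℤ) 1 :) := by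
  rintro x ⟨hx, -⟩
  simp only [Fintype.coe_piFinset, Set.mem_pi, Set.mem_univ, Finset.coe_Icc, Set.mem_Icc,
    forall_const]
  intro i
  have : x i ^ 2 ≤ 2 := hx ▸ Finset.single_le_sum (fun j _ => sq_nonneg (x j)) (Finset.mem_univ i)
  constructor <;> nlinarith

lemma shortVectors_eq_filter (n : ℕ) (s : ℤ) : shortVectors n s =
    ((Fintype.piFinset fun _ : Fin n => Finset.Icc (-1 : ℤ) 1).filter
      fun x => ∑ i, x i ^ 2 = 2 ∧ ∑ i, x i = s :) := by
  ext x
  rw [Finset.coe_filter]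
  exact ⟨fun hx => ⟨shortVectors_subset_piFinset n s hx, hx⟩, And.right⟩

lemma ncard_shortVectors_four_zero : (shortVectors 4 0).ncard = 12 := by
  rw [shortVectors_eq_filter, Set.ncard_coe_finset]
  decide

lemma ncard_shortVectors_four_neg_two : (shortVectors 4 (-2)).ncard = 6 := by
  rw [shortVectors_eq_filter, Set.ncard_coe_finset]
  decide

def sigmaMatrix : Matrix (Fin 6) (Fin 6) ℤ :=
  !![ 2,  1,  1,  1, 0, 0;
     -1,  0, -1, -1, 0, 0;
     -1, -1,  0, -1, 0, 0;
     -1, -1, -1,  0, 0, 0;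
      0,  0,  0,  0, 0, 1;
      0,  0,  0,  0, 1, 0]

lemma toMatrix'_eq_sigmaMatrix (σ : (Fin 6 → ℤ) →ₗ[ℤ] (Fin 6 → ℤ))
    (hH : σ (Pi.single 0 1) = ofCoeffs [2, -1, -1, -1, 0, 0])
    (hQ1 : σ (Pi.single 1 1) = ofCoeffs [1, 0, -1, -1, 0, 0])
    (hQ2 : σ (Pi.single 2 1) = ofCoeffs [1, -1, 0, -1, 0, 0])
    (hQ3 : σ (Pi.single 3 1) = ofCoeffs [1, -1, -1, 0, 0, 0])
    (hQ4 : σ (Pi.single 4 1) = ofCoeffs [0, 0, 0, 0, 0, 1])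
    (hQ5 : σ (Pi.single 5 1) = ofCoeffs [0, 0, 0, 0, 1, 0]) :
    LinearMap.toMatrix' σ = sigmaMatrix := by
  ext i j
  fin_cases j <;>
    simp only [LinearMap.toMatrix'_apply, Fin.zero_eta, Fin.mk_one, Fin.reduceFinMk,
      hH, hQ1, hQ2, hQ3, hQ4, hQ5] <;>
    fin_cases i <;> rfl

lemma sigmaMatrix_mul_self : sigmaMatrix * sigmaMatrix = 1 := by decide

lemma sigmaMatrix_transpose_mul_dpGram_mul : sigmaMatrixᵀ * dpGram 5 * sigmaMatrix = dpGram 5 := by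
  decide

lemma sigmaMatrix_mulVec_dpK : sigmaMatrix *ᵥ dpK 5 = dpK 5 := by decide

lemma sigmaMatrix_mulVec_eq_self_iff (m : DP 5) :
    sigmaMatrix *ᵥ m = m ↔ m 0 + m 1 + m 2 + m 3 = 0 ∧ m 4 = m 5 := by
  simp only [funext_iff, Fin.forall_fin_succ, sigmaMatrix, cons_mulVec, dotProduct,
    Fin.sum_univ_six, cons_val, Fin.succ_zero_eq_one, Fin.succ_one_eq_two, Fin.reduceSucc,
    IsEmpty.forall_iff, and_true]
  omega

lemma even_dpForm_dpK_of_mulVec_eq_self {m : DP 5} (hm : sigmaMatrix *ᵥ m = m) :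
    Even (dpForm m (dpK 5)) := by
  rw [sigmaMatrix_mulVec_eq_self_iff] at hm
  rw [dpForm_dpK_five]
  exact ⟨-m 0 - m 4, by omega⟩

def fixedLift (u : ℤ) (x : Fin 4 → ℤ) : DP 5 :=
  ![x 0 + 2 * u, x 1, x 2, x 3, -x 0 - u, -x 0 - u]

lemma fixedLift_injective (u : ℤ) : Function.Injective (fixedLift u) := by
  intro x y h
  have h := funext_iff.1 h
  ext i
  fin_cases i
  · simpa [fixedLift] using h 0
  · exact h 1
  · exact h 2
  · exact h 3

lemma setOf_fixed_eq_image_fixedLift (u : ℤ) :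
    {m : DP 5 | (dpForm m (dpK 5) = -2 * u ∧ dpForm m m = 2 * u ^ 2 - 2) ∧
      sigmaMatrix *ᵥ m = m} = fixedLift u '' shortVectors 4 (-2 * u) := by
  ext m
  simp only [Set.mem_ofPred_eq, Set.mem_image, sigmaMatrix_mulVec_eq_self_iff, dpForm_dpK_five,
    dpForm_self_five, shortVectors, Fin.sum_univ_four]
  constructor
  · rintro ⟨⟨hk, hm⟩, hfix, h45⟩
    have h5 : m 5 = u - m 0 := by omega
    rw [h45, h5] at hm
    refine ⟨![m 0 - 2 * u, m 1, m 2, m 3], ⟨?_, ?_⟩, ?_⟩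
    · simp only [cons_val_zero, cons_val_one, cons_val]
      linear_combination -hm
    · simp only [cons_val_zero, cons_val_one, cons_val]
      omega
    · ext i
      fin_cases i <;>
        simp only [fixedLift, Fin.zero_eta, Fin.mk_one, Fin.reduceFinMk, cons_val_zero, cons_val_one,
          cons_val] <;>
        omega
  · rintro ⟨x, ⟨hsq, hsum⟩, rfl⟩
    simp only [fixedLift, cons_val_zero, cons_val_one, cons_val, and_true]
    exact ⟨⟨by omega, by linear_combination -hsq⟩, by omega⟩

lemma ncard_setOf_fixed (u : ℤ) :
    {m : DP 5 | (dpForm m (dpK 5) = -2 * u ∧ dpForm m m = 2 * u ^ 2 - 2) ∧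
      sigmaMatrix *ᵥ m = m}.ncard = (shortVectors 4 (-2 * u)).ncard := by
  rw [setOf_fixed_eq_image_fixedLift, Set.ncard_image_of_injective _ (fixedLift_injective u)]

/-- The real structure on `M_5` of type `2A1` (degree 4): counts of fixed
elements in the Del Pezzo sets. -/
theorem realStructure_deg4_2A1 (σ : (Fin 6 → ℤ) →ₗ[ℤ] (Fin 6 → ℤ))
    (hH : σ (Pi.single 0 1) = ofCoeffs [2, -1, -1, -1, 0, 0])
    (hQ1 : σ (Pi.single 1 1) = ofCoeffs [1, 0, -1, -1, 0, 0])
    (hQ2 : σ (Pi.single 2 1) = ofCoeffs [1, -1, 0, -1, 0, 0])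
    (hQ3 : σ (Pi.single 3 1) = ofCoeffs [1, -1, -1, 0, 0, 0])
    (hQ4 : σ (Pi.single 4 1) = ofCoeffs [0, 0, 0, 0, 0, 1])
    (hQ5 : σ (Pi.single 5 1) = ofCoeffs [0, 0, 0, 0, 1, 0]) :
    (∀ v : DP 5, σ (σ v) = v) ∧
    (∀ v w : DP 5, dpForm (σ v) (σ w) = dpForm v w) ∧
    σ (dpK 5) = dpK 5 ∧
    {m ∈ RSet 5 | σ m = m}.ncard = 12 ∧
    {m ∈ ESet 5 | σ m = m}.ncard = 0 ∧
    {m ∈ GSet 5 | σ m = m}.ncard = 6 := by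
  have hσ (v : DP 5) : σ v = sigmaMatrix *ᵥ v := by
    rw [← toMatrix'_eq_sigmaMatrix σ hH hQ1 hQ2 hQ3 hQ4 hQ5, LinearMap.toMatrix'_mulVec]
  simp only [hσ]
  refine ⟨fun v => by rw [mulVec_mulVec, sigmaMatrix_mul_self, one_mulVec],
    dpForm_mulVec_mulVec sigmaMatrix_transpose_mul_dpGram_mul, sigmaMatrix_mulVec_dpK, ?_, ?_, ?_⟩
  · simpa [RSet, ncard_shortVectors_four_zero] using ncard_setOf_fixed 0
  · have hE : {m ∈ ESet 5 | sigmaMatrix *ᵥ m = m} = ∅ :=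
      Set.eq_empty_of_forall_notMem fun m ⟨⟨hk, _⟩, hfix⟩ => by
        simpa [hk] using even_dpForm_dpK_of_mulVec_eq_self hfix
    rw [hE, Set.ncard_empty]
  · simpa [GSet, ncard_shortVectors_four_neg_two] using ncard_setOf_fixed 1
end

section
/- Let σ : M_8 → M_8 be the ℤ-linear map determined by σ(H) = 17H − 6(Q_1 + ⋯ + Q_8) and σ(Q_i) = 6H − 3Q_i − 2·Σ_{j ≠ i} Q_j for i = 1, …, 8. Then σ is an involution preserving the bilinear form with σ(k) = k, and σ fixes no element of R_8, no element of E_8, and no element of G_8. -/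
/-!
The map `σ` is the Bertini involution `v ↦ 2⟨v,k⟩k - v` of the degree-one lattice, where
`⟨k,k⟩ = 9 - 8 = 1`. Any such map is an isometric involution fixing `k`. A fixed vector `m`
satisfies `2m = 2⟨m,k⟩k`, hence `⟨m,m⟩ = ⟨m,k⟩²`, which fails for the pairs
`(⟨m,k⟩, ⟨m,m⟩) = (0,-2), (-1,-1), (-2,0)` defining `R_8`, `E_8` and `G_8`.
-/

namespace LinearMap.BilinForm

variable {R M : Type*} [CommRing R] [AddCommGroup M] [Module R M]

/-- The Bertini involution `v ↦ 2⟨v,k⟩k - v`: minus the reflection in `k` when `⟨k,k⟩ = 1`. -/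
def bertini (B : LinearMap.BilinForm R M) (k : M) : M →ₗ[R] M :=
  2 • (B.flip k).smulRight k - LinearMap.id

variable {B : LinearMap.BilinForm R M} {k : M}

theorem bertini_apply (v : M) : B.bertini k v = (2 * B v k) • k - v := by
  simp [bertini, mul_smul, two_smul]

theorem bertini_apply_right (hk : B k k = 1) (v : M) : B (B.bertini k v) k = B v k := by
  simp only [bertini_apply, map_sub, map_smul, LinearMap.sub_apply, LinearMap.smul_apply, hk,
    smul_eq_mul]
  ring

theorem bertini_bertini (hk : B k k = 1) (v : M) : B.bertini k (B.bertini k v) = v := by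
  rw [bertini_apply (B.bertini k v), bertini_apply_right hk, bertini_apply, sub_sub_cancel]

theorem bertini_self (hk : B k k = 1) : B.bertini k k = k := by
  rw [bertini_apply, hk, mul_one, two_smul, add_sub_cancel_right]

theorem IsSymm.bertini_apply_bertini (hB : B.IsSymm) (hk : B k k = 1) (v w : M) :
    B (B.bertini k v) (B.bertini k w) = B v w := by
  simp only [bertini_apply, map_sub, map_smul, LinearMap.sub_apply, LinearMap.smul_apply, hk,
    smul_eq_mul, hB.eq k w]
  ring

theorem apply_self_eq_sq_of_bertini_eq [NoZeroDivisors R] [CharZero R] (hk : B k k = 1) {m : M}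
    (hm : B.bertini k m = m) : B m m = B m k ^ 2 := by
  have h2m : (2 : R) • m = (2 * B m k) • k := by
    rw [bertini_apply, sub_eq_iff_eq_add] at hm
    rw [two_smul, hm]
  have h4 := congrArg (fun x => B x x) h2m
  simp only [map_smul, LinearMap.smul_apply, smul_eq_mul, hk] at h4
  exact mul_left_cancel₀ (by norm_num : (4 : R) ≠ 0) (by linear_combination h4)

theorem bertini_ne_self [NoZeroDivisors R] [CharZero R] (hk : B k k = 1) {m : M}
    (hm : B m m ≠ B m k ^ 2) : B.bertini k m ≠ m :=
  fun h => hm (apply_self_eq_sq_of_bertini_eq hk h)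

end LinearMap.BilinForm

open LinearMap.BilinForm

def dpBilin (r : ℕ) : LinearMap.BilinForm ℤ (DP r) :=
  LinearMap.mk₂ ℤ dpForm
    (fun v v' w => by
      simp only [dpForm, Pi.add_apply, add_mul, Finset.sum_add_distrib]; ring)
    (fun c v w => by
      simp only [dpForm, Pi.smul_apply, smul_eq_mul, mul_assoc, ← Finset.mul_sum]; ring)
    (fun v w w' => by
      simp only [dpForm, Pi.add_apply, mul_add, Finset.sum_add_distrib]; ring)
    (fun c v w => by
      simp only [dpForm, Pi.smul_apply, smul_eq_mul, mul_left_comm _ c, ← Finset.mul_sum]; ring)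

theorem dpBilin_apply {r : ℕ} (v w : DP r) : dpBilin r v w = dpForm v w := rfl

theorem dpBilin_isSymm (r : ℕ) : (dpBilin r).IsSymm :=
  ⟨fun v w => by simp only [dpBilin_apply, dpForm, mul_comm]⟩

theorem dpForm_dpK_self (r : ℕ) : dpForm (dpK r) (dpK r) = 9 - r := by
  simp [dpForm, dpK]

/-- The real structure on `M_8` of type `E8` (degree 1): it fixes no element
of the Del Pezzo sets. -/
theorem realStructure_deg1_E8 (σ : (Fin 9 → ℤ) →ₗ[ℤ] (Fin 9 → ℤ))
    (hH : σ (Pi.single 0 1) = fun j : Fin 9 => if j.val = 0 then (17 : ℤ) else -6)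
    (hQ : ∀ i : Fin 8, σ (Pi.single i.succ 1) =
      fun j : Fin 9 => if j.val = 0 then (6 : ℤ) else if j = i.succ then -3 else -2) :
    (∀ v : DP 8, σ (σ v) = v) ∧
    (∀ v w : DP 8, dpForm (σ v) (σ w) = dpForm v w) ∧
    σ (dpK 8) = dpK 8 ∧
    (∀ m ∈ RSet 8, σ m ≠ m) ∧
    (∀ m ∈ ESet 8, σ m ≠ m) ∧
    (∀ m ∈ GSet 8, σ m ≠ m) := by
  have hk : dpBilin 8 (dpK 8) (dpK 8) = 1 := by
    rw [dpBilin_apply, dpForm_dpK_self]; norm_num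
  have hσ : σ = (dpBilin 8).bertini (dpK 8) := by
    refine (Pi.basisFun ℤ (Fin 9)).ext (Fin.cases ?_ fun i => ?_) <;>
      simp only [Pi.basisFun_apply, bertini_apply, dpBilin_apply]
    · rw [hH]; decide
    · rw [hQ]; revert i; decide
  subst hσ
  refine ⟨bertini_bertini hk, (dpBilin_isSymm 8).bertini_apply_bertini hk, bertini_self hk,
    ?_, ?_, ?_⟩ <;>
  · rintro m ⟨hmk, hmm⟩
    refine bertini_ne_self hk ?_
    rw [dpBilin_apply, dpBilin_apply, hmk, hmm]
    norm_num
end
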